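/- Let Tⁿ be the flat n-torus, let p ∈ Tⁿ, and let q = p + (1/2, …, 1/2) be the antipodal point of p. Then there are exactly 2ⁿ distinct geodesics from p to q. -/

import Mathlib

/-- A geodesic in a metric space: a continuous path `γ : [0,1] → X` moving at
constant speed `c` and realizing distances, i.e. `d(γ s, γ t) = c·|s − t|`. -/
def IsGeodesic {X : Type*} [PseudoMetricSpace X] (γ : C(unitInterval, X)) : Prop :=
  ∃ c : ℝ, ∀ s t : unitInterval, dist (γ s) (γ t) = c * |(s : ℝ) - (t : ℝ)|

/-- A geodesic motion planning rule (GMPR) on `E ⊆ X × X`: a map, continuous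
on `E`, sending each pair `(x, y) ∈ E` to a geodesic from `x` to `y`. -/
def IsGMPROn {X : Type*} [PseudoMetricSpace X] (E : Set (X × X))
    (σ' : X × X → C(unitInterval, X)) : Prop :=
  ContinuousOn σ' E ∧ ∀ e ∈ E, IsGeodesic (σ' e) ∧ σ' e 0 = e.1 ∧ σ' e 1 = e.2

/-- The integer lattice `ℤⁿ` inside Euclidean space `ℝⁿ`. -/
noncomputable def intLattice (n : ℕ) : AddSubgroup (EuclideanSpace ℝ (Fin n)) where
  carrier := {x | ∀ i, ∃ m : ℤ, x i = m}
  zero_mem' := fun i => ⟨0, by simp⟩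
  add_mem' := by
    intro a b ha hb i
    obtain ⟨m, hm⟩ := ha i
    obtain ⟨l, hl⟩ := hb i
    exact ⟨m + l, by push_cast [PiLp.add_apply, hm, hl]; ring⟩
  neg_mem' := by
    intro a ha i
    obtain ⟨m, hm⟩ := ha i
    exact ⟨-m, by push_cast [PiLp.neg_apply, hm]; ring⟩

instance intLattice_isClosed (n : ℕ) :
    IsClosed ((intLattice n : AddSubgroup (EuclideanSpace ℝ (Fin n))) :
      Set (EuclideanSpace ℝ (Fin n))) := by
  have : ((intLattice n : AddSubgroup (EuclideanSpace ℝ (Fin n))) :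
      Set (EuclideanSpace ℝ (Fin n))) =
      ⋂ i, (fun x : EuclideanSpace ℝ (Fin n) => x i) ⁻¹'
        (Set.range ((↑) : ℤ → ℝ)) := by
    ext x
    simp [intLattice, Set.mem_iInter, eq_comm]
  rw [this]
  exact isClosed_iInter fun i =>
    Int.isClosedEmbedding_coe_real.isClosed_range.preimage
      (EuclideanSpace.proj i).continuous

/-- The flat `n`-torus `ℝⁿ/ℤⁿ`, equipped with the quotient metric induced by
the Euclidean metric on `ℝⁿ`. -/
abbrev FlatTorus (n : ℕ) := EuclideanSpace ℝ (Fin n) ⧸ intLattice n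

/-- The vector `(1/2, …, 1/2)` of `ℝⁿ`. -/
noncomputable def halfVec (n : ℕ) : EuclideanSpace ℝ (Fin n) :=
  (WithLp.equiv 2 (Fin n → ℝ)).symm fun _ => (1 : ℝ) / 2

/-! Write `[x]` for the class of `x ∈ ℝⁿ`. The antipode `q = p + [h]`, `h = (1/2, …, 1/2)`,
lies at distance `‖h‖ = √n/2` from `p`, and since every coordinate of a lift of `[h]` is a
half-integer, the lifts of `[h]` of norm at most `√n/2` are exactly the `2ⁿ` sign vectors
`σ = (±1/2, …, ±1/2)`. A geodesic `γ` from `p` to `q` has speed `√n/2`, so `γ t` is at distance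
`t·√n/2` from `p` and `(1 - t)·√n/2` from `q`. Shortest lifts `z` of `γ t - p` and `w` of
`q - γ t` add up to a lift of `[h]` of norm at most `√n/2`, hence to some `σ`; equality in the
triangle inequality then gives `z = t • σ`. The sign vector cannot depend on `t ∈ (0, 1)`: for
`σ ≠ σ'` the points `p + [s • σ]` and `p + [t • σ']` are strictly more than `|s - t|·√n/2`
apart. So the geodesics are the `2ⁿ` straight paths `t ↦ p + [t • σ]`. -/

theorem IsGeodesic.dist_eq {X : Type*} [PseudoMetricSpace X] {γ : C(unitInterval, X)}
    (hγ : IsGeodesic γ) (s t : unitInterval) :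
    dist (γ s) (γ t) = dist (γ 0) (γ 1) * |(s : ℝ) - t| := by
  obtain ⟨c, hc⟩ := hγ
  simp [hc]

theorem unitInterval.abs_sub_le_one (s t : unitInterval) : |(s : ℝ) - t| ≤ 1 :=
  abs_sub_le_iff.2 ⟨by linarith [s.2.2, t.2.1], by linarith [s.2.1, t.2.2]⟩

namespace EuclideanSpace

variable {ι : Type*} [Fintype ι]

theorem norm_le_norm_of_forall_abs_le {x y : EuclideanSpace ℝ ι} (h : ∀ i, |x i| ≤ |y i|) :
    ‖x‖ ≤ ‖y‖ := by
  simp only [EuclideanSpace.norm_eq, Real.norm_eq_abs]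
  exact Real.sqrt_le_sqrt (Finset.sum_le_sum fun i _ => pow_le_pow_left₀ (abs_nonneg _) (h i) 2)

theorem norm_lt_norm_of_forall_abs_le_of_abs_lt {x y : EuclideanSpace ℝ ι}
    (h : ∀ i, |x i| ≤ |y i|) {i : ι} (hi : |x i| < |y i|) : ‖x‖ < ‖y‖ := by
  simp only [EuclideanSpace.norm_eq, Real.norm_eq_abs]
  refine Real.sqrt_lt_sqrt (by positivity) ?_
  exact Finset.sum_lt_sum (fun j _ => pow_le_pow_left₀ (abs_nonneg _) (h j) 2)
    ⟨i, Finset.mem_univ i, pow_lt_pow_left₀ hi (abs_nonneg _) two_ne_zero⟩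

theorem norm_of_forall_abs_eq {x : EuclideanSpace ℝ ι} {r : ℝ} (hr : 0 ≤ r)
    (h : ∀ i, |x i| = r) : ‖x‖ = √(Fintype.card ι) * r := by
  simp only [EuclideanSpace.norm_eq, Real.norm_eq_abs, h, Finset.sum_const, Finset.card_univ,
    nsmul_eq_mul]
  rw [Real.sqrt_mul (Nat.cast_nonneg _), Real.sqrt_sq hr]

end EuclideanSpace

theorem abs_le_abs_sub_intCast {r : ℝ} (hr : |r| ≤ 1 / 2) (m : ℤ) : |r| ≤ |r - m| := by
  rcases eq_or_ne m 0 with rfl | hm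
  · simp
  · have h1 : (1 : ℝ) ≤ |(m : ℝ)| := by exact_mod_cast Int.one_le_abs hm
    have h2 : |(m : ℝ)| ≤ |r| + |r - m| := by simpa using abs_sub r (r - m)
    linarith

theorem abs_sub_div_two_lt_abs_add_div_two_sub_intCast {s t : ℝ} (hs : s ∈ Set.Ioo 0 1)
    (ht : t ∈ Set.Ioo 0 1) (m : ℤ) : |s - t| / 2 < |(s + t) / 2 - m| := by
  obtain ⟨hs0, hs1⟩ := hs
  obtain ⟨ht0, ht1⟩ := ht
  have h0 : |s - t| < s + t := abs_sub_lt_iff.2 ⟨by linarith, by linarith⟩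
  have h1 : |s - t| < 2 - s - t := abs_sub_lt_iff.2 ⟨by linarith, by linarith⟩
  rcases lt_trichotomy m 0 with hm | rfl | hm
  · have : (m : ℝ) ≤ -1 := by exact_mod_cast Int.le_sub_one_of_lt hm
    exact lt_abs.2 (Or.inl (by linarith))
  · exact lt_abs.2 (Or.inl (by push_cast; linarith))
  · have : (1 : ℝ) ≤ m := by exact_mod_cast hm
    exact lt_abs.2 (Or.inr (by linarith))

theorem abs_sub_mul_lt_abs_add_mul_sub_intCast {s t σ : ℝ} (hs : s ∈ Set.Ioo 0 1)
    (ht : t ∈ Set.Ioo 0 1) (hσ : |σ| = 1 / 2) (m : ℤ) : |(s - t) * σ| < |(s + t) * σ - m| := by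
  rw [abs_mul, hσ]
  rcases abs_eq (by norm_num : (0 : ℝ) ≤ 1 / 2) |>.1 hσ with rfl | rfl
  · rw [show (s + t) * (1 / 2) = (s + t) / 2 by ring]
    linarith [abs_sub_div_two_lt_abs_add_div_two_sub_intCast hs ht m]
  · rw [show (s + t) * -(1 / 2) - m = -((s + t) / 2 - ((-m : ℤ) : ℝ)) by push_cast; ring, abs_neg]
    linarith [abs_sub_div_two_lt_abs_add_div_two_sub_intCast hs ht (-m)]

namespace FlatTorus

variable {n : ℕ}

local notation "ℝⁿ" => EuclideanSpace ℝ (Fin n)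

theorem mk_eq_mk_iff {x y : ℝⁿ} : (x : FlatTorus n) = y ↔ ∀ i, ∃ m : ℤ, y i = x i + m := by
  rw [QuotientAddGroup.eq]
  refine forall_congr' fun i => exists_congr fun m => ?_
  change -x i + y i = m ↔ _
  constructor <;> intro h <;> linarith

noncomputable def roundVec (x : ℝⁿ) : ℝⁿ :=
  WithLp.toLp 2 fun i => (round (x i) : ℝ)

theorem mk_sub_roundVec (x : ℝⁿ) : ((x - roundVec x : ℝⁿ) : FlatTorus n) = x :=
  mk_eq_mk_iff.2 fun i => ⟨round (x i), by simp [roundVec]⟩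

theorem norm_mk_eq_norm_sub_roundVec (x : ℝⁿ) : ‖(x : FlatTorus n)‖ = ‖x - roundVec x‖ := by
  refine le_antisymm ?_ (QuotientAddGroup.le_norm_iff.2 fun y hy => ?_)
  · conv_lhs => rw [← mk_sub_roundVec x]
    exact QuotientAddGroup.norm_mk_le_norm
  · refine EuclideanSpace.norm_le_norm_of_forall_abs_le fun i => ?_
    obtain ⟨m, hm⟩ := mk_eq_mk_iff.1 hy i
    simpa [roundVec, hm] using round_le (x i) m

theorem exists_mk_eq_and_norm_eq (a : FlatTorus n) :
    ∃ z : ℝⁿ, (z : FlatTorus n) = a ∧ ‖z‖ = ‖a‖ := by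
  obtain ⟨x, rfl⟩ := QuotientAddGroup.mk_surjective a
  exact ⟨x - roundVec x, mk_sub_roundVec x, (norm_mk_eq_norm_sub_roundVec x).symm⟩

theorem norm_le_norm_mk {x y : ℝⁿ} (h : ∀ i (m : ℤ), |y i| ≤ |x i - m|) :
    ‖y‖ ≤ ‖(x : FlatTorus n)‖ := by
  rw [norm_mk_eq_norm_sub_roundVec]
  exact EuclideanSpace.norm_le_norm_of_forall_abs_le fun i => h i _

theorem norm_lt_norm_mk {x y : ℝⁿ} (h : ∀ i (m : ℤ), |y i| ≤ |x i - m|) {i : Fin n}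
    (hi : ∀ m : ℤ, |y i| < |x i - m|) : ‖y‖ < ‖(x : FlatTorus n)‖ := by
  rw [norm_mk_eq_norm_sub_roundVec]
  exact EuclideanSpace.norm_lt_norm_of_forall_abs_le_of_abs_lt (fun j => h j _) (hi _)

theorem norm_mk_of_forall_abs_le_half {x : ℝⁿ} (h : ∀ i, |x i| ≤ 1 / 2) :
    ‖(x : FlatTorus n)‖ = ‖x‖ :=
  le_antisymm QuotientAddGroup.norm_mk_le_norm
    (norm_le_norm_mk fun i => abs_le_abs_sub_intCast (h i))

@[simp] theorem halfVec_apply (i : Fin n) : halfVec n i = 1 / 2 := rfl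

theorem norm_halfVec : ‖halfVec n‖ = √n / 2 := by
  rw [EuclideanSpace.norm_of_forall_abs_eq (r := 1 / 2) (by norm_num) fun i => by norm_num,
    Fintype.card_fin]
  ring

noncomputable def signVec (ε : Fin n → Bool) : ℝⁿ :=
  WithLp.toLp 2 fun i => if ε i then 1 / 2 else -(1 / 2)

@[simp] theorem signVec_apply (ε : Fin n → Bool) (i : Fin n) :
    signVec ε i = if ε i then 1 / 2 else -(1 / 2) := rfl

theorem abs_signVec_apply (ε : Fin n → Bool) (i : Fin n) : |signVec ε i| = 1 / 2 := by
  rw [signVec_apply]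
  split_ifs <;> norm_num

theorem norm_signVec (ε : Fin n → Bool) : ‖signVec ε‖ = √n / 2 := by
  rw [EuclideanSpace.norm_of_forall_abs_eq (by norm_num) (abs_signVec_apply ε), Fintype.card_fin]
  ring

theorem mk_signVec (ε : Fin n → Bool) : (signVec ε : FlatTorus n) = halfVec n :=
  mk_eq_mk_iff.2 fun i => ⟨if ε i then 0 else 1, by rw [signVec_apply]; split_ifs <;> norm_num⟩

theorem exists_signVec_eq {u : ℝⁿ} (h : ∀ i, |u i| = 1 / 2) : ∃ ε, u = signVec ε := by
  refine ⟨fun i => decide (0 < u i), ?_⟩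
  ext i
  rcases abs_eq (by norm_num : (0 : ℝ) ≤ 1 / 2) |>.1 (h i) with hi | hi <;> norm_num [hi]

theorem exists_signVec_eq_of_mk_eq_halfVec {u : ℝⁿ} (hu : (u : FlatTorus n) = halfVec n)
    (hn : ‖u‖ ≤ √n / 2) : ∃ ε, u = signVec ε := by
  have hge : ∀ i, |halfVec n i| ≤ |u i| := fun i => by
    obtain ⟨m, hm⟩ := mk_eq_mk_iff.1 hu i
    rw [show u i = halfVec n i - m by linarith]
    exact abs_le_abs_sub_intCast (by norm_num) m
  refine exists_signVec_eq fun i => ((hge i).trans_eq' (by norm_num)).antisymm' ?_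
  by_contra! hi
  have := EuclideanSpace.norm_lt_norm_of_forall_abs_le_of_abs_lt hge (i := i) (by norm_num [hi])
  linarith [norm_halfVec (n := n)]

noncomputable def antipodalPath (p : FlatTorus n) (ε : Fin n → Bool) :
    C(unitInterval, FlatTorus n) where
  toFun t := p + (((t : ℝ) • signVec ε : ℝⁿ) : FlatTorus n)
  continuous_toFun := by fun_prop

theorem antipodalPath_apply (p : FlatTorus n) (ε : Fin n → Bool) (t : unitInterval) :
    antipodalPath p ε t = p + (((t : ℝ) • signVec ε : ℝⁿ) : FlatTorus n) := rfl

theorem antipodalPath_zero (p : FlatTorus n) (ε : Fin n → Bool) : antipodalPath p ε 0 = p := by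
  simp [antipodalPath_apply]

theorem antipodalPath_one (p : FlatTorus n) (ε : Fin n → Bool) :
    antipodalPath p ε 1 = p + (halfVec n : FlatTorus n) := by
  simp [antipodalPath_apply, mk_signVec]

theorem dist_antipodalPath (p : FlatTorus n) (ε : Fin n → Bool) (s t : unitInterval) :
    dist (antipodalPath p ε s) (antipodalPath p ε t) = √n / 2 * |(s : ℝ) - t| := by
  have hst := unitInterval.abs_sub_le_one s t
  rw [antipodalPath_apply, antipodalPath_apply, dist_add_left, dist_eq_norm,
    ← QuotientAddGroup.mk_sub, ← sub_smul, norm_mk_of_forall_abs_le_half, norm_smul,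
    norm_signVec, Real.norm_eq_abs, mul_comm]
  intro i
  simp only [PiLp.smul_apply, smul_eq_mul, abs_mul, abs_signVec_apply]
  nlinarith [abs_nonneg ((s : ℝ) - t)]

theorem isGeodesic_antipodalPath (p : FlatTorus n) (ε : Fin n → Bool) :
    IsGeodesic (antipodalPath p ε) :=
  ⟨_, dist_antipodalPath p ε⟩

theorem eq_of_dist_antipodalPath_le {p : FlatTorus n} {ε ε' : Fin n → Bool} {s t : unitInterval}
    (hs : (s : ℝ) ∈ Set.Ioo 0 1) (ht : (t : ℝ) ∈ Set.Ioo 0 1)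
    (h : dist (antipodalPath p ε s) (antipodalPath p ε' t) ≤ √n / 2 * |(s : ℝ) - t|) :
    ε = ε' := by
  by_contra hne
  obtain ⟨i, hi⟩ := Function.ne_iff.1 hne
  refine h.not_gt ?_
  rw [antipodalPath_apply, antipodalPath_apply, dist_add_left, dist_eq_norm,
    ← QuotientAddGroup.mk_sub]
  have hσ : ∀ j, signVec ε' j = if ε j = ε' j then signVec ε j else -signVec ε j := fun j => by
    simp only [signVec_apply]
    cases ε j <;> cases ε' j <;> norm_num
  have hy : ‖((s : ℝ) - t) • signVec ε‖ = √n / 2 * |(s : ℝ) - t| := by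
    rw [norm_smul, norm_signVec, Real.norm_eq_abs, mul_comm]
  rw [← hy]
  have hst := unitInterval.abs_sub_le_one s t
  refine norm_lt_norm_mk (fun j m => ?_) (i := i) fun m => ?_
  · simp only [PiLp.sub_apply, PiLp.smul_apply, smul_eq_mul, hσ j]
    split_ifs
    · rw [← sub_mul]
      exact abs_le_abs_sub_intCast (by rw [abs_mul, abs_signVec_apply]; linarith) m
    · rw [mul_neg, sub_neg_eq_add, ← add_mul]
      exact (abs_sub_mul_lt_abs_add_mul_sub_intCast hs ht (abs_signVec_apply ε j) m).le
  · simp only [PiLp.sub_apply, PiLp.smul_apply, smul_eq_mul, hσ i, if_neg hi, mul_neg,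
      sub_neg_eq_add, ← add_mul]
    exact abs_sub_mul_lt_abs_add_mul_sub_intCast hs ht (abs_signVec_apply ε i) m

theorem antipodalPath_injective (p : FlatTorus n) : Function.Injective (antipodalPath p) := by
  intro ε ε' h
  let half : unitInterval := ⟨1 / 2, by norm_num, by norm_num⟩
  have hhalf : (half : ℝ) ∈ Set.Ioo 0 1 := ⟨by norm_num [half], by norm_num [half]⟩
  exact eq_of_dist_antipodalPath_le hhalf hhalf (by rw [h, dist_self, sub_self, abs_zero, mul_zero])

theorem dist_add_mk_halfVec (p : FlatTorus n) :
    dist p (p + (halfVec n : FlatTorus n)) = √n / 2 := by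
  rw [dist_self_add_right, norm_mk_of_forall_abs_le_half fun i => by norm_num, norm_halfVec]

theorem exists_eq_add_mk_smul_signVec {p m : FlatTorus n} {t : ℝ}
    (hpm : dist p m = √n / 2 * t)
    (hmq : dist m (p + (halfVec n : FlatTorus n)) = √n / 2 * (1 - t)) :
    ∃ ε, m = p + ((t • signVec ε : ℝⁿ) : FlatTorus n) := by
  obtain ⟨z, hz, hzn⟩ := exists_mk_eq_and_norm_eq (m - p)
  obtain ⟨w, hw, hwn⟩ := exists_mk_eq_and_norm_eq (p + (halfVec n : FlatTorus n) - m)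
  rw [← dist_eq_norm, dist_comm, hpm] at hzn
  rw [← dist_eq_norm, dist_comm, hmq] at hwn
  have hzw : ((z + w : ℝⁿ) : FlatTorus n) = halfVec n := by
    rw [QuotientAddGroup.mk_add, hz, hw]
    abel
  obtain ⟨ε, hε⟩ := exists_signVec_eq_of_mk_eq_halfVec hzw
    ((norm_add_le z w).trans_eq (by rw [hzn, hwn]; ring))
  have hray : SameRay ℝ z w :=
    sameRay_iff_norm_add.2 (by rw [hε, norm_signVec, hzn, hwn]; ring)
  obtain ⟨a, -, ha, -, -, hza, -⟩ := hray.exists_eq_smul_add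
  rw [hε] at hza
  have hat : (a - t) * (√n / 2) = 0 := by
    rw [hza, norm_smul, norm_signVec, Real.norm_eq_abs, abs_of_nonneg ha] at hzn
    linarith
  have hsmul : a • signVec ε = t • signVec ε := by
    rw [← sub_eq_zero, ← sub_smul, ← norm_eq_zero, norm_smul, norm_signVec, Real.norm_eq_abs]
    rcases mul_eq_zero.1 hat with h | h <;> simp [h]
  refine ⟨ε, ?_⟩
  rw [← hsmul, ← hza, hz]
  abel

theorem exists_eq_antipodalPath {p : FlatTorus n} {γ : C(unitInterval, FlatTorus n)}
    (hγ : IsGeodesic γ) (h0 : γ 0 = p) (h1 : γ 1 = p + (halfVec n : FlatTorus n)) :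
    ∃ ε, γ = antipodalPath p ε := by
  have hdist (s t : unitInterval) : dist (γ s) (γ t) = √n / 2 * |(s : ℝ) - t| := by
    rw [hγ.dist_eq, h0, h1, dist_add_mk_halfVec]
  have hpoint (t : unitInterval) : ∃ ε, γ t = antipodalPath p ε t := by
    refine exists_eq_add_mk_smul_signVec ?_ ?_
    · rw [← h0, hdist, Set.Icc.coe_zero, zero_sub, abs_neg, abs_of_nonneg t.2.1]
    · rw [← h1, hdist, Set.Icc.coe_one, abs_sub_comm, abs_of_nonneg (sub_nonneg.2 t.2.2)]
  choose ε hε using hpoint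
  let half : unitInterval := ⟨1 / 2, by norm_num, by norm_num⟩
  have hhalf : (half : ℝ) ∈ Set.Ioo 0 1 := ⟨by norm_num [half], by norm_num [half]⟩
  refine ⟨ε half, ContinuousMap.ext fun t => ?_⟩
  rcases t.2.1.eq_or_lt with ht0 | ht0
  · rw [show t = 0 from Subtype.ext ht0.symm, h0, antipodalPath_zero]
  rcases t.2.2.eq_or_lt with ht1 | ht1
  · rw [show t = 1 from Subtype.ext ht1, h1, antipodalPath_one]
  have hdist_half : dist (antipodalPath p (ε t) t) (antipodalPath p (ε half) half) ≤
      √n / 2 * |(t : ℝ) - half| := by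
    rw [← hε t, ← hε half, hdist]
  rw [hε t, eq_of_dist_antipodalPath_le ⟨ht0, ht1⟩ hhalf hdist_half]

theorem setOf_isGeodesic_eq_range_antipodalPath (p : FlatTorus n) :
    {γ : C(unitInterval, FlatTorus n) | IsGeodesic γ ∧ γ 0 = p ∧
      γ 1 = p + (halfVec n : FlatTorus n)} = Set.range (antipodalPath p) := by
  ext γ
  constructor
  · rintro ⟨hγ, h0, h1⟩
    obtain ⟨ε, rfl⟩ := exists_eq_antipodalPath hγ h0 h1
    exact ⟨ε, rfl⟩
  · rintro ⟨ε, rfl⟩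
    exact ⟨isGeodesic_antipodalPath p ε, antipodalPath_zero p ε, antipodalPath_one p ε⟩

end FlatTorus

/-- **Exactly `2ⁿ` geodesics join a point of the flat `n`-torus to its
antipode.**  For `p ∈ Tⁿ` and `q = p + (1/2, …, 1/2)`, there are exactly `2ⁿ`
distinct geodesics from `p` to `q`. -/
theorem flatTorus_card_geodesics_to_antipode (n : ℕ) (p : FlatTorus n) :
    {γ : C(unitInterval, FlatTorus n) | IsGeodesic γ ∧ γ 0 = p ∧
      γ 1 = p + (QuotientAddGroup.mk (halfVec n) : FlatTorus n)}.ncard = 2 ^ n := by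
  rw [FlatTorus.setOf_isGeodesic_eq_range_antipodalPath,
    Set.ncard_range_of_injective (FlatTorus.antipodalPath_injective p), Nat.card_eq_fintype_card,
    Fintype.card_fun, Fintype.card_bool, Fintype.card_fin]
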